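/- There exists a symmetric n×n matrix A over K satisfying N_λ·A + A·N_λᵀ = 0 with det(A) ≠ 0 if and only if every even integer that occurs as a part of λ occurs an even number of times (equivalently, d(λ) = 0). -/

import Mathlib

/-!
In block coordinates `(r, p)` (the `p`-th vector of the `r`-th Jordan block) the equation
`N A + A Nᵀ = 0` says `A(r, p + 1; r', q) = -A(r, p; r', q + 1)`, with entries beyond a block
read as `0`. Hence `A(r, p; r', q) = 0` once `p + q ≥ min λ_r λ_r'`, and along the antidiagonal
of a pair of blocks of equal size `m` the entries alternate in sign.

Grade the basis by the `sl₂`-weight `2p + 1 - λ_r`: `A` vanishes in positive total weight, and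
the weights sum to zero, so `det A` only sees the weight-zero part of `A`. In that part the
columns `(r', m - 1)` with `λ_r' = m` only meet the rows `(r, 0)` with `λ_r = m`, through the
matrix `C r r' = A(r, 0; r', m - 1)`, which by symmetry and alternation satisfies
`Cᵀ = (-1)^(m-1) C`. For even `m` of odd multiplicity `C` is skew of odd size, so `det A = 0`.

Conversely, pair the blocks of each even size by a fixed-point-free involution `σ` and let `A`
have the alternating antidiagonal `±(-1)^p` between the blocks `r` and `σ r` (every odd block
is paired with itself); the signs are chosen so that `A` is symmetric.
-/

open Matrix

/-- Partial sum `s_r = λ_1 + ⋯ + λ_{r-1}` (where the parts are `lam 0, lam 1, …`). -/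
def psum {k : ℕ} (lam : Fin k → ℕ) (r : Fin k) : ℕ :=
  ∑ t ∈ Finset.univ.filter (fun t => t < r), lam t

/-- The `n × n` nilpotent Jordan matrix of type `λ`: its 1-indexed `(i, j)` entry is `1`
if `j = i + 1` and `s_r < i < i + 1 ≤ s_r + λ_r` for some `r`, and `0` otherwise
(here written with 0-indexed `i`, `j`). -/
def jordanNilpotent (K : Type*) [Field K] (n k : ℕ) (lam : Fin k → ℕ) :
    Matrix (Fin n) (Fin n) K :=
  Matrix.of fun i j =>
    if (j : ℕ) = (i : ℕ) + 1 ∧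
        ∃ r : Fin k, psum lam r ≤ (i : ℕ) ∧ (i : ℕ) + 2 ≤ psum lam r + lam r
      then 1 else 0

theorem psum_add_lt {n k : ℕ} (lam : Fin k → ℕ) (hn : ∑ r, lam r = n) (r : Fin k)
    (p : ℕ) (hp : p < lam r) : psum lam r + p < n := by
  have h1 : lam r + psum lam r ≤ ∑ t, lam t := by
    rw [psum, ← Finset.sum_insert (by simp)]
    exact Finset.sum_le_sum_of_subset (Finset.subset_univ _)
  omega

/-- The index in `Fin n` of the `p`-th position (0-indexed) of the `r`-th block. -/
def blockIdx {n k : ℕ} (lam : Fin k → ℕ) (hn : ∑ r, lam r = n) (r : Fin k) (p : ℕ)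
    (hp : p < lam r) : Fin n :=
  ⟨psum lam r + p, psum_add_lt lam hn r p hp⟩

namespace Matrix

variable {ι κ : Type*} [Fintype ι] [DecidableEq ι]

theorem det_eq_zero_of_transpose_eq_neg {R : Type*} [CommRing R] [IsAddTorsionFree R]
    {M : Matrix ι ι R} (hM : Mᵀ = -M) (hodd : Odd (Fintype.card ι)) : M.det = 0 :=
  self_eq_neg.1 <| by conv_lhs => rw [← det_transpose, hM, det_neg, hodd.neg_one_pow, neg_one_mul]

def degreeZeroPart {R G : Type*} [Zero R] [AddZeroClass G] [DecidableEq G] (M : Matrix ι ι R)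
    (w : ι → G) : Matrix ι ι R :=
  of fun i j => if w i + w j = 0 then M i j else 0

theorem det_eq_det_degreeZeroPart {R G : Type*} [CommRing R] [AddCommGroup G] [LinearOrder G]
    [IsOrderedAddMonoid G] (M : Matrix ι ι R) (w : ι → G) (hw : ∑ i, w i = 0)
    (hM : ∀ i j, 0 < w i + w j → M i j = 0) : M.det = (M.degreeZeroPart w).det := by
  simp only [det_apply]
  refine Finset.sum_congr rfl fun σ _ => congrArg _ ?_
  by_cases hσ : ∃ i, 0 < w (σ i) + w i
  · obtain ⟨i, hi⟩ := hσ
    rw [Finset.prod_eq_zero (f := fun i => M (σ i) i) (Finset.mem_univ i) (hM _ _ hi),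
      Finset.prod_eq_zero (Finset.mem_univ i) (by simp [degreeZeroPart, hi.ne'])]
  · push Not at hσ
    have hsum : ∑ i, (w (σ i) + w i) = 0 := by
      rw [Finset.sum_add_distrib, Equiv.sum_comp σ w, hw, add_zero]
    have hzero := (Finset.sum_eq_zero_iff_of_nonpos fun i _ => hσ i).1 hsum
    exact Finset.prod_congr rfl fun i hi => by simp [degreeZeroPart, hzero i hi]

theorem det_eq_zero_of_det_submatrix_eq_zero {R : Type*} [CommRing R] [IsDomain R] [Fintype κ]
    [DecidableEq κ] (M : Matrix ι ι R) {row col : κ → ι} (hcol : Function.Injective col)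
    (hM : ∀ i t, i ∉ Set.range row → M i (col t) = 0) (h : (M.submatrix row col).det = 0) :
    M.det = 0 := by
  obtain ⟨x, hx, hMx⟩ := exists_mulVec_eq_zero_iff.2 h
  refine exists_mulVec_eq_zero_iff.1 ⟨∑ t, Pi.single (col t) (x t), ?_, ?_⟩
  · obtain ⟨s, hs⟩ := Function.ne_iff.1 hx
    refine Function.ne_iff.2 ⟨col s, ?_⟩
    simpa [Finset.sum_apply, Pi.single_apply, hcol.eq_iff] using hs
  · ext i
    simp only [mulVec_sum, mulVec_single, Finset.sum_apply, Pi.zero_apply]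
    by_cases hi : i ∈ Set.range row
    · obtain ⟨s, rfl⟩ := hi
      simpa [mulVec, dotProduct, mul_comm] using congrFun hMx s
    · exact Finset.sum_eq_zero fun t _ => by simp [hM i t hi]

theorem exists_isSymm_det_ne_zero_reindex_iff {K : Type*} [CommRing K] [Fintype κ]
    [DecidableEq κ] (e : ι ≃ κ) (N : Matrix ι ι K) :
    (∃ A : Matrix κ κ K, A.IsSymm ∧ reindex e e N * A + A * (reindex e e N)ᵀ = 0 ∧ A.det ≠ 0) ↔
      ∃ B : Matrix ι ι K, B.IsSymm ∧ N * B + B * Nᵀ = 0 ∧ B.det ≠ 0 := by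
  refine (reindex e e).symm.exists_congr_left.trans (exists_congr fun B => ?_)
  simp only [Equiv.symm_symm, det_reindex_self, transpose_reindex]
  refine and_congr ⟨fun h => by simpa using h.reindex e.symm, fun h => h.reindex e⟩
    (and_congr_left' ?_)
  rw [← coe_reindexAlgEquiv K K, ← map_mul, ← map_mul, ← map_add,
    map_eq_zero_iff _ (reindexAlgEquiv K K e).injective]

end Matrix

theorem Equiv.Perm.exists_involutive_ne_self_of_even_card {α : Type*} [Fintype α]
    (h : Even (Fintype.card α)) : ∃ π : Perm α, Function.Involutive π ∧ ∀ a, π a ≠ a := by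
  obtain ⟨j, hj⟩ := h
  let e : α ≃ Fin j ⊕ Fin j := Fintype.equivOfCardEq (by simp [hj])
  refine ⟨(e.trans (Equiv.sumComm _ _)).trans e.symm, fun a => by simp, fun a ha => ?_⟩
  have := congrArg e ha
  simp only [Equiv.trans_apply, Equiv.apply_symm_apply, Equiv.sumComm_apply] at this
  rcases hea : e a with b | b <;> simp [hea] at this

theorem Equiv.Perm.exists_involutive_fiberwise {ι β : Type*} [Fintype ι] [DecidableEq β]
    (f : ι → β) (p : β → Prop)
    (h : ∀ b, p b → Even (Finset.univ.filter fun i => f i = b).card) :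
    ∃ σ : Perm ι, Function.Involutive σ ∧ (∀ i, f (σ i) = f i) ∧ ∀ i, p (f i) → σ i ≠ i := by
  have hfiber (b : β) :
      ∃ π : Perm {i // f i = b}, Function.Involutive π ∧ (p b → ∀ a, π a ≠ a) := by
    by_cases hb : p b
    · obtain ⟨π, hπ, hne⟩ := exists_involutive_ne_self_of_even_card (α := {i // f i = b})
        (by rw [Fintype.card_subtype]; exact h b hb)
      exact ⟨π, hπ, fun _ => hne⟩
    · exact ⟨1, fun _ => rfl, fun h => absurd h hb⟩
  choose π hinv hne using hfiber
  have hσ : ∀ b (j : {i // f i = b}), Equiv.ofFiberEquiv π j.1 = (π b j).1 := by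
    rintro b ⟨j, rfl⟩
    rfl
  refine ⟨Equiv.ofFiberEquiv π, fun i => ?_, Equiv.ofFiberEquiv_map π, fun i hi hfix => ?_⟩
  · rw [hσ (f i) ⟨i, rfl⟩, hσ, hinv]
  · exact hne (f i) hi ⟨i, rfl⟩ (Subtype.ext ((hσ _ _).symm.trans hfix))

theorem Function.Involutive.exists_apply_eq_mul {ι R : Type*} [LinearOrder ι] [Monoid R]
    {σ : ι → ι} (hinv : Function.Involutive σ) {u : ι → R} (hu : ∀ i, u (σ i) = u i)
    (hu2 : ∀ i, u i * u i = 1) (hfix : ∀ i, σ i = i → u i = 1) :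
    ∃ ε : ι → R, (∀ i, ε i = 1 ∨ ε i = u i) ∧ ∀ i, ε (σ i) = u i * ε i := by
  refine ⟨fun i => if σ i < i then u i else 1, fun i => by dsimp only; split_ifs <;> simp,
    fun i => ?_⟩
  dsimp only
  rcases lt_trichotomy (σ i) i with h | h | h
  · rw [if_neg (by rw [hinv i]; exact h.not_gt), if_pos h, hu2]
  · simp [h, hfix i h]
  · rw [if_pos (by rwa [hinv i]), if_neg h.not_gt, hu, mul_one]

section BlockIndex

variable {k : ℕ} {lam : Fin k → ℕ}

variable (lam) in
abbrev BlockIndex : Type := (r : Fin k) × Fin (lam r)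

theorem BlockIndex.mk_eq_mk_iff {r r' : Fin k} {p : Fin (lam r)} {q : Fin (lam r')} :
    (⟨r, p⟩ : BlockIndex lam) = ⟨r', q⟩ ↔ r = r' ∧ (p : ℕ) = q := by
  rw [Sigma.mk.inj_iff]
  exact and_congr_right fun h => Fin.heq_ext_iff (congrArg lam h)

theorem psum_eq_sum_castLE (r : Fin k) :
    psum lam r = ∑ i : Fin r, lam (Fin.castLE r.2.le i) := by
  have : (Finset.univ.filter fun t : Fin k => t < r) = Finset.univ.map (Fin.castLEEmb r.2.le) := by
    ext t
    simp only [Finset.mem_filter, Finset.mem_univ, true_and, Finset.mem_map, Fin.castLEEmb_apply]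
    exact ⟨fun h => ⟨⟨t, h⟩, rfl⟩, by rintro ⟨i, rfl⟩; exact i.2⟩
  rw [psum, this, Finset.sum_map]
  rfl

variable (lam) in
def blockIndexEquiv {n : ℕ} (hn : ∑ r, lam r = n) : BlockIndex lam ≃ Fin n :=
  finSigmaFinEquiv.trans (finCongr hn)

theorem blockIndexEquiv_apply {n : ℕ} (hn : ∑ r, lam r = n) (x : BlockIndex lam) :
    (blockIndexEquiv lam hn x : ℕ) = psum lam x.1 + x.2 := by
  simp [blockIndexEquiv, psum_eq_sum_castLE]

theorem BlockIndex.eq_of_psum_add_eq {x y : BlockIndex lam}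
    (h : psum lam x.1 + x.2 = psum lam y.1 + y.2) : x = y :=
  (blockIndexEquiv lam rfl).injective (Fin.ext (by simpa [blockIndexEquiv_apply] using h))

def blockShift (K : Type*) [Zero K] [One K] (lam : Fin k → ℕ) :
    Matrix (BlockIndex lam) (BlockIndex lam) K :=
  of fun x y => if x.1 = y.1 ∧ (y.2 : ℕ) = x.2 + 1 then 1 else 0

theorem jordanNilpotent_eq_reindex (K : Type*) [Field K] {n : ℕ} (hn : ∑ r, lam r = n) :
    jordanNilpotent K n k lam =
      reindex (blockIndexEquiv lam hn) (blockIndexEquiv lam hn) (blockShift K lam) := by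
  ext i j
  obtain ⟨⟨r₀, p⟩, rfl⟩ := (blockIndexEquiv lam hn).surjective i
  obtain ⟨⟨r₁, q⟩, rfl⟩ := (blockIndexEquiv lam hn).surjective j
  simp only [jordanNilpotent, blockShift, reindex_apply, submatrix_apply, Equiv.symm_apply_apply,
    of_apply, blockIndexEquiv_apply]
  refine if_congr ⟨?_, ?_⟩ rfl rfl
  · rintro ⟨hq, r, hr, hr'⟩
    -- the witness block `r` is the block `r₀` of `i`, by injectivity of `blockIndexEquiv`
    obtain ⟨rfl, hp⟩ := BlockIndex.mk_eq_mk_iff.1 <| BlockIndex.eq_of_psum_add_eq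
      (x := ⟨r₀, p⟩) (y := ⟨r, ⟨psum lam r₀ + p - psum lam r, by omega⟩⟩) (by dsimp only; omega)
    obtain ⟨rfl, hq'⟩ := BlockIndex.mk_eq_mk_iff.1 <| BlockIndex.eq_of_psum_add_eq
      (x := ⟨r₁, q⟩) (y := ⟨r₀, ⟨p + 1, by omega⟩⟩) (by dsimp only; omega)
    exact ⟨rfl, hq'⟩
  · rintro ⟨rfl, hq⟩
    exact ⟨by omega, r₀, Nat.le_add_right _ _, by omega⟩

end BlockIndex

section BlockEntry

variable {K : Type*} {k : ℕ} {lam : Fin k → ℕ}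

-- Extended by zero, so that `N B + B Nᵀ = 0` becomes one identity without boundary cases.
def blockEntry [Zero K] (B : Matrix (BlockIndex lam) (BlockIndex lam) K) (r : Fin k) (p : ℕ)
    (r' : Fin k) (q : ℕ) : K :=
  if h : p < lam r ∧ q < lam r' then B ⟨r, ⟨p, h.1⟩⟩ ⟨r', ⟨q, h.2⟩⟩ else 0

variable [CommRing K] {B : Matrix (BlockIndex lam) (BlockIndex lam) K}

theorem blockEntry_mk (B : Matrix (BlockIndex lam) (BlockIndex lam) K) (x y : BlockIndex lam) :
    blockEntry B x.1 x.2 y.1 y.2 = B x y :=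
  dif_pos ⟨x.2.2, y.2.2⟩

theorem blockEntry_transpose (r : Fin k) (p : ℕ) (r' : Fin k) (q : ℕ) :
    blockEntry Bᵀ r p r' q = blockEntry B r' q r p := by
  simp only [blockEntry, and_comm, transpose_apply]

theorem blockEntry_comm (hsym : B.IsSymm) (r : Fin k) (p : ℕ) (r' : Fin k) (q : ℕ) :
    blockEntry B r p r' q = blockEntry B r' q r p := by
  rw [← blockEntry_transpose, hsym.eq]

theorem blockShift_mul_apply (B : Matrix (BlockIndex lam) (BlockIndex lam) K)
    (x y : BlockIndex lam) :
    (blockShift K lam * B) x y = blockEntry B x.1 (x.2 + 1) y.1 y.2 := by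
  obtain ⟨r, p⟩ := x
  dsimp only
  rw [mul_apply, blockEntry]
  split_ifs with h
  · refine (Finset.sum_eq_single ⟨r, ⟨p + 1, h.1⟩⟩ (fun z _ hz => ?_) (by simp)).trans ?_
    · obtain ⟨r', q⟩ := z
      simp only [blockShift, of_apply, ite_mul, one_mul, zero_mul]
      exact if_neg fun hrq => hz (BlockIndex.mk_eq_mk_iff.2 ⟨hrq.1.symm, hrq.2⟩)
    · simp [blockShift]
  · refine Finset.sum_eq_zero fun ⟨r', q⟩ _ => ?_
    simp only [blockShift, of_apply, ite_mul, one_mul, zero_mul]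
    refine if_neg ?_
    rintro ⟨rfl, hq⟩
    exact h ⟨by omega, y.2.2⟩

theorem mul_blockShift_transpose_apply (B : Matrix (BlockIndex lam) (BlockIndex lam) K)
    (x y : BlockIndex lam) :
    (B * (blockShift K lam)ᵀ) x y = blockEntry B x.1 x.2 y.1 (y.2 + 1) := by
  have : B * (blockShift K lam)ᵀ = (blockShift K lam * Bᵀ)ᵀ := by
    rw [transpose_mul, transpose_transpose]
  rw [this, transpose_apply, blockShift_mul_apply, blockEntry_transpose]

theorem blockShift_mul_add_eq_zero_iff :
    blockShift K lam * B + B * (blockShift K lam)ᵀ = 0 ↔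
      ∀ r p r' q, blockEntry B r (p + 1) r' q + blockEntry B r p r' (q + 1) = 0 := by
  refine ⟨fun h r p r' q => ?_, fun h => ?_⟩
  · by_cases hpq : p < lam r ∧ q < lam r'
    · simpa [blockShift_mul_apply, mul_blockShift_transpose_apply] using
        congr_fun₂ h ⟨r, ⟨p, hpq.1⟩⟩ ⟨r', ⟨q, hpq.2⟩⟩
    · rw [blockEntry, blockEntry, dif_neg (by omega), dif_neg (by omega), add_zero]
  · ext x y
    rw [Matrix.add_apply, blockShift_mul_apply, mul_blockShift_transpose_apply]
    exact h _ _ _ _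

end BlockEntry

def blockWeight {k : ℕ} {lam : Fin k → ℕ} (x : BlockIndex lam) : ℤ := 2 * x.2 + 1 - lam x.1

theorem sum_blockWeight {k : ℕ} {lam : Fin k → ℕ} : ∑ x : BlockIndex lam, blockWeight x = 0 := by
  rw [Fintype.sum_sigma]
  refine Finset.sum_eq_zero fun r _ => self_eq_neg.1 ?_
  rw [← Finset.sum_neg_distrib, ← Equiv.sum_comp Fin.revPerm (fun p => -blockWeight ⟨r, p⟩)]
  refine Finset.sum_congr rfl fun p _ => ?_
  simp only [blockWeight, Fin.revPerm_apply, Fin.val_rev]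
  omega

section Vanishing

variable {K : Type*} [CommRing K] {k : ℕ} {lam : Fin k → ℕ}
  {B : Matrix (BlockIndex lam) (BlockIndex lam) K}
  (hB : ∀ r p r' q, blockEntry B r (p + 1) r' q + blockEntry B r p r' (q + 1) = 0)
include hB

theorem blockEntry_eq_zero_of_le_add {r r' : Fin k} {p q : ℕ} (h : lam r ≤ p + q) :
    blockEntry B r p r' q = 0 := by
  induction q generalizing p with
  | zero => exact dif_neg (by omega)
  | succ q ih => rw [eq_neg_of_add_eq_zero_right (hB r p r' q), ih (by omega), neg_zero]

theorem blockEntry_add_left (r r' : Fin k) (p q j : ℕ) :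
    blockEntry B r (p + j) r' q = (-1) ^ j * blockEntry B r p r' (q + j) := by
  induction j generalizing q with
  | zero => simp
  | succ j ih =>
    rw [← add_assoc, eq_neg_of_add_eq_zero_left (hB r (p + j) r' q), ih, pow_succ,
      show q + 1 + j = q + (j + 1) by omega]
    ring

variable (hsym : B.IsSymm)
include hsym

theorem blockEntry_eq_zero_of_min_le {r r' : Fin k} {p q : ℕ}
    (h : min (lam r) (lam r') ≤ p + q) : blockEntry B r p r' q = 0 := by
  rcases min_le_iff.1 h with h | h
  · exact blockEntry_eq_zero_of_le_add hB h
  · rw [blockEntry_comm hsym]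
    exact blockEntry_eq_zero_of_le_add hB (by omega)

theorem blockEntry_zero_comm (r r' : Fin k) (j : ℕ) :
    blockEntry B r' 0 r j = (-1) ^ j * blockEntry B r 0 r' j := by
  rw [blockEntry_comm hsym]
  simpa only [zero_add] using blockEntry_add_left hB r r' 0 0 j

theorem eq_zero_of_blockWeight_add_pos {x y : BlockIndex lam}
    (h : 0 < blockWeight x + blockWeight y) : B x y = 0 := by
  rw [← blockEntry_mk B]
  refine blockEntry_eq_zero_of_min_le hB hsym ?_
  simp only [blockWeight] at h
  omega

theorem degreeZeroPart_blockWeight_eq_zero {x : BlockIndex lam} {r' : Fin k} {q : Fin (lam r')}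
    (hq : (q : ℕ) + 1 = lam r') (hx : ¬((x.2 : ℕ) = 0 ∧ lam x.1 = lam r')) :
    B.degreeZeroPart blockWeight x ⟨r', q⟩ = 0 := by
  rw [degreeZeroPart, of_apply, ite_eq_right_iff, ← blockEntry_mk B]
  intro h
  refine blockEntry_eq_zero_of_min_le hB hsym ?_
  simp only [blockWeight] at h
  dsimp only
  omega

end Vanishing

theorem even_card_fiber_of_blockShift_form {K : Type*} [CommRing K] [IsDomain K] [CharZero K]
    {k : ℕ} {lam : Fin k → ℕ} (hpos : ∀ r, 1 ≤ lam r)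
    {B : Matrix (BlockIndex lam) (BlockIndex lam) K} (hsym : B.IsSymm)
    (hB : blockShift K lam * B + B * (blockShift K lam)ᵀ = 0) (hdet : B.det ≠ 0) (m : ℕ)
    (hm : Even m) :
    Even (Finset.univ.filter fun r => lam r = m).card := by
  rw [blockShift_mul_add_eq_zero_iff] at hB
  by_contra hodd
  have hm1 : 1 ≤ m := by
    obtain ⟨r, hr⟩ := Finset.card_pos.1 (Nat.pos_of_ne_zero fun h => hodd (h ▸ ⟨0, rfl⟩))
    exact (Finset.mem_filter.1 hr).2 ▸ hpos r
  let row : {r // lam r = m} → BlockIndex lam := fun t => ⟨t.1, ⟨0, by have := t.2; omega⟩⟩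
  let col : {r // lam r = m} → BlockIndex lam := fun t => ⟨t.1, ⟨m - 1, by have := t.2; omega⟩⟩
  rw [det_eq_det_degreeZeroPart B blockWeight sum_blockWeight
    fun _ _ => eq_zero_of_blockWeight_add_pos hB hsym] at hdet
  refine hdet (det_eq_zero_of_det_submatrix_eq_zero _ (row := row) (col := col) ?_ ?_ ?_)
  · exact fun s t h => Subtype.ext (BlockIndex.mk_eq_mk_iff.1 h).1
  · rintro ⟨r, p⟩ t hx
    refine degreeZeroPart_blockWeight_eq_zero hB hsym (by have := t.2; dsimp; omega)
      fun h => hx ⟨⟨r, h.2.trans t.2⟩, BlockIndex.mk_eq_mk_iff.2 ⟨rfl, h.1.symm⟩⟩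
  · refine det_eq_zero_of_transpose_eq_neg ?_
      (by rwa [Fintype.card_subtype, ← Nat.not_even_iff_odd])
    have hC (s t : {r // lam r = m}) :
        B.degreeZeroPart blockWeight (row s) (col t) = blockEntry B s 0 t (m - 1) := by
      rw [degreeZeroPart, of_apply, if_pos, ← blockEntry_mk B]
      simp only [blockWeight, row, col, s.2, t.2]
      omega
    ext s t
    rw [transpose_apply, submatrix_apply, neg_apply, submatrix_apply, hC, hC,
      blockEntry_zero_comm hB hsym, (Nat.Even.sub_odd hm1 hm odd_one).neg_one_pow, neg_one_mul]

section Construction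

variable {K : Type*} [CommRing K] {k : ℕ} {lam : Fin k → ℕ} {σ : Fin k → Fin k}
  (hσ : ∀ r, lam (σ r) = lam r) (hinv : Function.Involutive σ)

def blockFlip : Equiv.Perm (BlockIndex lam) :=
  Function.Involutive.toPerm (fun x => ⟨σ x.1, Fin.cast (hσ x.1).symm x.2.rev⟩) <| by
    rintro ⟨r, p⟩
    refine BlockIndex.mk_eq_mk_iff.2 ⟨hinv r, ?_⟩
    simp only [Fin.val_cast, Fin.val_rev, hσ]
    omega

theorem blockFlip_mk (r : Fin k) (p : Fin (lam r)) :
    blockFlip hσ hinv ⟨r, p⟩ = ⟨σ r, Fin.cast (hσ r).symm p.rev⟩ :=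
  rfl

theorem blockFlip_blockFlip (x : BlockIndex lam) :
    blockFlip hσ hinv (blockFlip hσ hinv x) = x :=
  Function.Involutive.toPerm_involutive _ x

theorem blockFlip_mk_eq_mk_iff {r r' : Fin k} {p : Fin (lam r)} {q : Fin (lam r')} :
    blockFlip hσ hinv ⟨r, p⟩ = ⟨r', q⟩ ↔ σ r = r' ∧ (p : ℕ) + q + 1 = lam r := by
  rw [blockFlip_mk, BlockIndex.mk_eq_mk_iff, Fin.val_cast, Fin.val_rev]
  have := p.2
  omega

def flipForm (ε : Fin k → K) : Matrix (BlockIndex lam) (BlockIndex lam) K :=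
  diagonal (fun x => ε x.1 * (-1) ^ (x.2 : ℕ)) * (blockFlip hσ hinv).permMatrix K

theorem flipForm_apply (ε : Fin k → K) (x y : BlockIndex lam) :
    flipForm hσ hinv ε x y =
      if blockFlip hσ hinv x = y then ε x.1 * (-1) ^ (x.2 : ℕ) else 0 := by
  simp [flipForm, Equiv.Perm.permMatrix, PEquiv.toMatrix_apply, Equiv.toPEquiv_apply, eq_comm]

theorem det_flipForm_ne_zero [IsDomain K] {ε : Fin k → K} (hε : ∀ r, ε r ≠ 0) :
    (flipForm hσ hinv ε).det ≠ 0 := by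
  rw [flipForm, det_mul, det_diagonal, det_permutation]
  refine mul_ne_zero (Finset.prod_ne_zero_iff.2 fun x _ => mul_ne_zero (hε x.1) ?_) ?_
  · exact pow_ne_zero _ (neg_ne_zero.2 one_ne_zero)
  · exact (Units.map (Int.castRingHom K).toMonoidHom _).ne_zero

theorem blockEntry_flipForm (ε : Fin k → K) (r : Fin k) (p : ℕ) (r' : Fin k) (q : ℕ) :
    blockEntry (flipForm hσ hinv ε) r p r' q =
      if p < lam r ∧ σ r = r' ∧ p + q + 1 = lam r then ε r * (-1) ^ p else 0 := by
  rw [blockEntry]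
  split_ifs with h h' h'
  · rw [flipForm_apply, if_pos ((blockFlip_mk_eq_mk_iff hσ hinv).2 h'.2)]
  · rw [flipForm_apply, if_neg fun h'' => h' ⟨h.1, (blockFlip_mk_eq_mk_iff hσ hinv).1 h''⟩]
  · exact absurd ⟨h'.1, by rw [← h'.2.1, hσ]; omega⟩ h
  · rfl

theorem blockShift_mul_flipForm_add_eq_zero (ε : Fin k → K) :
    blockShift K lam * flipForm hσ hinv ε + flipForm hσ hinv ε * (blockShift K lam)ᵀ = 0 := by
  refine blockShift_mul_add_eq_zero_iff.2 fun r p r' q => ?_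
  rw [blockEntry_flipForm, blockEntry_flipForm]
  by_cases h : σ r = r' ∧ p + q + 2 = lam r
  · rw [if_pos ⟨by omega, h.1, by omega⟩, if_pos ⟨by omega, h.1, by omega⟩, pow_succ]
    ring
  · rw [if_neg (by omega), if_neg (by omega), add_zero]

theorem flipForm_isSymm {ε : Fin k → K} (hε : ∀ r, ε (σ r) = (-1) ^ (lam r - 1) * ε r) :
    (flipForm hσ hinv ε).IsSymm := by
  ext x y
  rw [transpose_apply, flipForm_apply, flipForm_apply]
  by_cases h : blockFlip hσ hinv x = y
  · subst h
    rw [if_pos (blockFlip_blockFlip hσ hinv x), if_pos rfl]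
    obtain ⟨r, p⟩ := x
    have := p.2
    rw [blockFlip_mk, hε, Fin.val_cast, Fin.val_rev, mul_comm _ (ε r), mul_assoc, ← pow_add,
      show lam r - 1 + (lam r - (p + 1)) = p + 2 * (lam r - (p + 1)) by omega, pow_add, pow_mul,
      neg_one_sq, one_pow, mul_one]
  · rw [if_neg h, if_neg fun h' => h (by rw [← h', blockFlip_blockFlip])]

end Construction

theorem exists_blockShift_form_of_even_card {K : Type*} [CommRing K] [IsDomain K] {k : ℕ}
    {lam : Fin k → ℕ}
    (hcard : ∀ m : ℕ, Even m → Even (Finset.univ.filter fun r => lam r = m).card) :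
    ∃ B : Matrix (BlockIndex lam) (BlockIndex lam) K,
      B.IsSymm ∧ blockShift K lam * B + B * (blockShift K lam)ᵀ = 0 ∧ B.det ≠ 0 := by
  obtain ⟨σ, hinv, hσ, hfix⟩ := Equiv.Perm.exists_involutive_fiberwise lam Even hcard
  have hu2 (r : Fin k) : (-1 : K) ^ (lam r - 1) * (-1) ^ (lam r - 1) = 1 := by
    rw [← mul_pow, neg_one_mul, neg_neg, one_pow]
  have hodd (r : Fin k) (hr : σ r = r) : Even (lam r - 1) :=
    Nat.Odd.sub_odd (Nat.not_even_iff_odd.1 fun he => hfix r he hr) odd_one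
  obtain ⟨ε, hε₀, hε⟩ := hinv.exists_apply_eq_mul (u := fun r => (-1 : K) ^ (lam r - 1))
    (fun r => by rw [hσ]) hu2 fun r hr => (hodd r hr).neg_one_pow
  refine ⟨flipForm hσ hinv ε, flipForm_isSymm hσ hinv hε,
    blockShift_mul_flipForm_add_eq_zero hσ hinv ε, det_flipForm_ne_zero hσ hinv fun r => ?_⟩
  rcases hε₀ r with h | h <;> rw [h]
  · exact one_ne_zero
  · exact left_ne_zero_of_mul_eq_one (hu2 r)

theorem jordan_fixed_nondegenerate_iff_general (K : Type*) [Field K] [CharZero K] (n k : ℕ)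
    (lam : Fin k → ℕ) (hpos : ∀ r, 1 ≤ lam r)
    (hn : ∑ r, lam r = n) :
    (∃ A : Matrix (Fin n) (Fin n) K, A.IsSymm ∧
        jordanNilpotent K n k lam * A + A * (jordanNilpotent K n k lam)ᵀ = 0 ∧
        A.det ≠ 0) ↔
      ∀ m : ℕ, Even m → Even ((Finset.univ.filter fun r => lam r = m)).card := by
  rw [jordanNilpotent_eq_reindex K hn, exists_isSymm_det_ne_zero_reindex_iff]
  exact ⟨fun ⟨_, hsym, hB, hdet⟩ => even_card_fiber_of_blockShift_form hpos hsym hB hdet,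
    exists_blockShift_form_of_even_card⟩

/-- There is a nondegenerate symmetric matrix `A` with `N_λ * A + A * N_λᵀ = 0` iff every
even integer occurs as a part of `λ` an even number of times. -/
theorem jordan_fixed_nondegenerate_iff (K : Type*) [Field K] [CharZero K] (n k : ℕ)
    (lam : Fin k → ℕ) (hpos : ∀ r, 1 ≤ lam r) (hmono : Antitone lam)
    (hn : ∑ r, lam r = n) :
    (∃ A : Matrix (Fin n) (Fin n) K, A.IsSymm ∧
        jordanNilpotent K n k lam * A + A * (jordanNilpotent K n k lam)ᵀ = 0 ∧
        A.det ≠ 0) ↔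
      ∀ m : ℕ, Even m → Even ((Finset.univ.filter fun r => lam r = m)).card :=
  jordan_fixed_nondegenerate_iff_general K n k lam hpos hn
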